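/- arXiv:0805.4299 — 2 statements merged into one kernel-verified Lean document; each statement's English description precedes it below -/
import Mathlib

section
/- Let r ≥ 1 and n ∈ ℕ, let t ≥ 0 be real, and let x₁, …, x_r be positive real numbers. Then ∑_{n₁+⋯+n_r = n} A_{n₁}(x₁,t) ⋯ A_{n_r}(x_r,t) = A_n(x₁ + ⋯ + x_r, t), where the sum runs over all r-tuples (n₁,…,n_r) of nonnegative integers with n₁+⋯+n_r = n. -/
/-- The generalized binomial coefficient `binom(z, n) = z(z-1)⋯(z-n+1)/n!` for real `z`. -/
noncomputable def genBinom (z : ℝ) (n : ℕ) : ℝ :=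
  (descPochhammer ℝ n).eval z / (Nat.factorial n)

/-- `A_n(x,t) := (x/(x+nt)) · binom(x+nt, n)`, with `A_0(x,t) := 1`. -/
noncomputable def rothe (n : ℕ) (x t : ℝ) : ℝ :=
  if n = 0 then 1 else x / (x + n * t) * genBinom (x + n * t) n

/-!
The normalised Gould polynomials `q_n(x) = x (x + nt - 1) ⋯ (x + nt - n + 1) / n!` agree with
`A_n(x, t)` for `x, t ≥ 0`, satisfy `q_n(0) = δ_{n0}` and the difference equation
`q_{n+1}(x + 1) - q_{n+1}(x) = q_n(x + t)`. Any such sequence is of binomial type,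
`q_n(x + y) = ∑_{i+j=n} q_i(x) q_j(y)`: by induction on `n`, the difference of the two sides of the
identity for `n + 1` is, as a polynomial in `x`, `1`-periodic and vanishes at `0`, hence is zero.
The `r`-fold convolution then follows by induction on the set of indices.
-/

open Polynomial Finset
open scoped Nat

theorem Polynomial.eq_zero_of_eval_add_one_eq {R : Type*} [CommRing R] [IsDomain R] [CharZero R]
    {p : R[X]} (hp : ∀ z, p.eval (z + 1) = p.eval z) (h0 : p.eval 0 = 0) : p = 0 := by
  have hnat : ∀ m : ℕ, p.eval (m : R) = 0 := by
    intro m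
    induction m with
    | zero => simpa using h0
    | succ m ih => rw [Nat.cast_succ, hp, ih]
  refine p.eq_zero_of_infinite_isRoot ((Set.infinite_range_of_injective Nat.cast_injective).mono ?_)
  rintro _ ⟨m, rfl⟩
  exact hnat m

theorem Polynomial.eval_add_eq_sum_antidiagonal_of_eval_add_one_sub {R : Type*} [CommRing R]
    [IsDomain R] [CharZero R] (s : ℕ → R[X]) (t : R) (h_zero : s 0 = 1)
    (h_eval_zero : ∀ n, (s (n + 1)).eval 0 = 0)
    (h_diff : ∀ n z, (s (n + 1)).eval (z + 1) - (s (n + 1)).eval z = (s n).eval (z + t))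
    (n : ℕ) (x y : R) :
    (s n).eval (x + y) = ∑ p ∈ antidiagonal n, (s p.1).eval x * (s p.2).eval y := by
  induction n generalizing x with
  | zero => simp [h_zero]
  | succ n ih =>
    set F : R[X] := (s (n + 1)).comp (X + C y)
      - ∑ p ∈ antidiagonal (n + 1), C ((s p.2).eval y) * s p.1
    have hF : ∀ z, F.eval z = (s (n + 1)).eval (z + y)
        - ∑ p ∈ antidiagonal (n + 1), (s p.1).eval z * (s p.2).eval y := by
      intro z
      simp [F, eval_finsetSum, mul_comm]
    suffices F = 0 by simpa [hF, sub_eq_zero] using congr_arg (eval x) this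
    refine eq_zero_of_eval_add_one_eq (fun z => ?_) ?_
    · have hsum : ∑ p ∈ antidiagonal n, (s (p.1 + 1)).eval (z + 1) * (s p.2).eval y
          = ∑ p ∈ antidiagonal n, (s (p.1 + 1)).eval z * (s p.2).eval y
            + ∑ p ∈ antidiagonal n, (s p.1).eval (z + t) * (s p.2).eval y := by
        rw [← sum_add_distrib]
        refine sum_congr rfl fun p _ => ?_
        linear_combination (s p.2).eval y * h_diff p.1 z
      rw [hF, hF, Nat.sum_antidiagonal_succ, Nat.sum_antidiagonal_succ, hsum, ← ih,
        h_zero, eval_one, eval_one, add_right_comm z 1 y, add_right_comm z t y]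
      linear_combination h_diff n (z + y)
    · simp [hF, Nat.sum_antidiagonal_succ, h_zero, h_eval_zero]

theorem descPochhammer_succ_eval_left {R : Type*} [CommRing R] (n : ℕ) (z : R) :
    (descPochhammer R (n + 1)).eval z = z * (descPochhammer R n).eval (z - 1) := by
  simp [descPochhammer_succ_left]

section RothePoly

variable {K : Type*} [Field K]

/-- `A_n(·, t)` as a polynomial; it agrees with `rothe n x t` except where `x + nt = 0 ≠ x`, at
which `rothe` divides by zero. -/
noncomputable def rothePoly (t : K) : ℕ → K[X]
  | 0 => 1
  | n + 1 => C ((n + 1)! : K)⁻¹ * X * (descPochhammer K n).comp (X + C ((n + 1) * t - 1))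

@[simp]
theorem rothePoly_zero (t : K) : rothePoly t 0 = 1 := rfl

theorem rothePoly_succ_eval (t : K) (n : ℕ) (z : K) :
    (rothePoly t (n + 1)).eval z
      = z * (descPochhammer K n).eval (z + (n + 1) * t - 1) / (n + 1)! := by
  simp only [rothePoly, eval_mul, eval_C, eval_X, eval_comp, eval_add]
  rw [← add_sub_assoc]
  ring

theorem rothePoly_succ_eval_zero (t : K) (n : ℕ) : (rothePoly t (n + 1)).eval 0 = 0 := by
  simp [rothePoly_succ_eval]

theorem rothePoly_eval_add_one_sub [CharZero K] (t : K) (n : ℕ) (z : K) :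
    (rothePoly t (n + 1)).eval (z + 1) - (rothePoly t (n + 1)).eval z
      = (rothePoly t n).eval (z + t) := by
  cases n with
  | zero => simp [rothePoly_succ_eval]
  | succ m =>
    obtain ⟨w, hw⟩ : ∃ w, w = z + (m + 2) * t - 1 := ⟨_, rfl⟩
    have e_one : z + 1 + (((m + 1 : ℕ) : K) + 1) * t - 1 = w + 1 := by rw [hw]; push_cast; ring
    have e_zero : z + (((m + 1 : ℕ) : K) + 1) * t - 1 = w := by rw [hw]; push_cast; ring
    have e_shift : z + t + ((m : K) + 1) * t - 1 = w := by rw [hw]; ring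
    have hm : (m : K) + 1 + 1 ≠ 0 := by exact_mod_cast Nat.succ_ne_zero (m + 1)
    have hfac : ((m + 1)! : K) ≠ 0 := by exact_mod_cast (m + 1).factorial_ne_zero
    rw [rothePoly_succ_eval, rothePoly_succ_eval, rothePoly_succ_eval, e_one, e_zero, e_shift,
      descPochhammer_succ_eval_left, add_sub_cancel_right, descPochhammer_succ_eval,
      Nat.factorial_succ (m + 1)]
    push_cast
    field_simp
    linear_combination (descPochhammer K m).eval w * hw

theorem rothePoly_eval_add [CharZero K] (t : K) (n : ℕ) (x y : K) :
    (rothePoly t n).eval (x + y)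
      = ∑ p ∈ antidiagonal n, (rothePoly t p.1).eval x * (rothePoly t p.2).eval y :=
  eval_add_eq_sum_antidiagonal_of_eval_add_one_sub _ t rfl (rothePoly_succ_eval_zero t)
    (rothePoly_eval_add_one_sub t) n x y

end RothePoly

theorem Finset.sum_piAntidiag_prod_eq_apply_sum {ι M R : Type*} [DecidableEq ι] [AddCommMonoid M]
    [CommSemiring R] (a : ℕ → M → R) (h_zero : a 0 0 = 1) (h_zero_succ : ∀ n, a (n + 1) 0 = 0)
    (h_add : ∀ n x y, a n (x + y) = ∑ p ∈ antidiagonal n, a p.1 x * a p.2 y)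
    (s : Finset ι) (x : ι → M) (n : ℕ) :
    ∑ f ∈ s.piAntidiag n, ∏ i ∈ s, a (f i) (x i) = a n (∑ i ∈ s, x i) := by
  induction s using Finset.cons_induction generalizing n with
  | empty => cases n <;> simp [h_zero, h_zero_succ]
  | cons j s hj ih =>
    rw [piAntidiag_cons, sum_disjiUnion, sum_cons, h_add]
    refine sum_congr rfl fun p _ => ?_
    rw [sum_map, ← ih, mul_sum]
    refine sum_congr rfl fun f hf => ?_
    have hfj : f j = 0 := not_imp_comm.1 ((mem_piAntidiag.mp hf).2 j) hj
    rw [prod_cons]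
    simp only [addRightEmbedding_apply, Pi.add_apply, hfj, zero_add]
    congr 1
    refine prod_congr rfl fun i hi => ?_
    rw [if_neg (ne_of_mem_of_not_mem hi hj), add_zero]

theorem rothe_eq_eval_rothePoly {n : ℕ} {x t : ℝ} (hx : 0 ≤ x) (ht : 0 ≤ t) :
    rothe n x t = (rothePoly t n).eval x := by
  cases n with
  | zero => simp [rothe]
  | succ m =>
    rcases hx.eq_or_lt with rfl | hx
    · simp [rothe, rothePoly_succ_eval]
    · have hpos : x + (m + 1) * t ≠ 0 := by positivity
      rw [rothe, if_neg m.succ_ne_zero, genBinom, rothePoly_succ_eval,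
        descPochhammer_succ_eval_left]
      push_cast
      field_simp

theorem rothe_multi_convolution_general (r : ℕ) (n : ℕ) (t : ℝ) (ht : 0 ≤ t)
    (x : Fin r → ℝ) (hx : ∀ i, 0 < x i) :
    ∑ f ∈ Finset.Nat.antidiagonalTuple r n, ∏ i, rothe (f i) (x i) t
      = rothe n (∑ i, x i) t := by
  rw [← piAntidiag_univ_fin_eq_antidiagonalTuple,
    rothe_eq_eval_rothePoly (sum_nonneg fun i _ => (hx i).le) ht,
    ← sum_piAntidiag_prod_eq_apply_sum (fun m z => (rothePoly t m).eval z) eval_one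
      (rothePoly_succ_eval_zero t) (rothePoly_eval_add t)]
  exact sum_congr rfl fun f _ => prod_congr rfl fun i _ => rothe_eq_eval_rothePoly (hx i).le ht

/-- For `r ≥ 1`, `n ∈ ℕ`, `t ≥ 0` and positive reals `x₁, …, x_r`,
`∑_{n₁+⋯+n_r = n} A_{n₁}(x₁,t) ⋯ A_{n_r}(x_r,t) = A_n(x₁+⋯+x_r, t)`,
the sum running over all `r`-tuples of nonnegative integers summing to `n`. -/
theorem rothe_multi_convolution (r : ℕ) (hr : 1 ≤ r) (n : ℕ) (t : ℝ) (ht : 0 ≤ t)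
    (x : Fin r → ℝ) (hx : ∀ i, 0 < x i) :
    ∑ f ∈ Finset.Nat.antidiagonalTuple r n, ∏ i, rothe (f i) (x i) t
      = rothe n (∑ i, x i) t :=
  rothe_multi_convolution_general r n t ht x hx
end

section
/- Let m ≥ 1 and n ≥ 1 be integers. Then ∑_{n₁+⋯+n_m = n−1} C^m_{n₁} ⋯ C^m_{n_m} = C^m_n, where the sum runs over all m-tuples (n₁,…,n_m) of nonnegative integers with n₁+⋯+n_m = n−1. -/
/-!
`C^m_n` is the Raney number `R_{m,1}(n)`, where `R_{p,r}(n) = r / (np + r) * binom(np + r, n)`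
satisfies `R_{p,r}(0) = 1`, `R_{p,0}(n + 1) = 0` and the Pascal-type recurrence
`R_{p,r+1}(n + 1) = R_{p,r}(n + 1) + R_{p,r+p}(n)`. Taking these as the definition, induction gives
the convolution `R_{p,r+s} = R_{p,r} * R_{p,s}`; so the `m`-fold convolution of `R_{m,1}` is
`R_{m,m}`, and `R_{m,m}(n - 1) = R_{m,1}(n)` is the recurrence at `r = 0`.
-/

/-- The `n`-th `m`-ary Catalan number `C^m_n = binom(nm, n) / (n(m−1)+1)`, as a rational
number. -/
def mCatalan (m n : ℕ) : ℚ :=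
  (Nat.choose (n * m) n : ℚ) / ((n : ℚ) * ((m : ℚ) - 1) + 1)

open Finset

theorem Finset.Nat.sum_antidiagonalTuple_succ {M : Type*} [AddCommMonoid M] (k n : ℕ)
    (g : (Fin (k + 1) → ℕ) → M) :
    ∑ f ∈ antidiagonalTuple (k + 1) n, g f =
      ∑ ij ∈ antidiagonal n, ∑ f ∈ antidiagonalTuple k ij.2, g (Fin.cons ij.1 f) := by
  -- `antidiagonalTuple` is defined by exactly this recursion, on lists.
  simp only [sum_eq_multiset_sum, antidiagonalTuple, Multiset.Nat.antidiagonalTuple,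
    List.Nat.antidiagonalTuple, Multiset.map_coe, Multiset.sum_coe]
  change _ = (List.map _ (List.Nat.antidiagonal n)).sum
  induction List.Nat.antidiagonal n <;> simp_all [Function.comp_def]

def raney (p : ℕ) : ℕ → ℕ → ℕ
  | _, 0 => 1
  | 0, _ + 1 => 0
  | r + 1, n + 1 => raney p r (n + 1) + raney p (r + p) n
termination_by r n => (n, r)

section Raney

variable (p : ℕ)

@[simp] theorem raney_zero_right (r : ℕ) : raney p r 0 = 1 := by rw [raney]

@[simp] theorem raney_zero_succ (n : ℕ) : raney p 0 (n + 1) = 0 := by rw [raney]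

theorem raney_succ_succ (r n : ℕ) :
    raney p (r + 1) (n + 1) = raney p r (n + 1) + raney p (r + p) n := by
  rw [raney]

theorem raney_one_succ (n : ℕ) : raney p 1 (n + 1) = raney p p n := by
  rw [raney_succ_succ, raney_zero_succ, zero_add, zero_add]

theorem raney_add (r s n : ℕ) :
    raney p (r + s) n = ∑ ij ∈ antidiagonal n, raney p r ij.1 * raney p s ij.2 := by
  induction n generalizing r s with
  | zero => simp
  | succ n ih =>
    induction s with
    | zero => simp [Nat.sum_antidiagonal_succ']
    | succ s ihs =>
      rw [Nat.sum_antidiagonal_succ'] at ihs ⊢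
      simp only [raney_zero_right, mul_one] at ihs ⊢
      rw [← add_assoc, raney_succ_succ, ihs]
      simp only [raney_succ_succ, mul_add, sum_add_distrib, ← ih, add_assoc]

theorem raney_sum {k : ℕ} (r : Fin k → ℕ) (n : ℕ) :
    raney p (∑ i, r i) n = ∑ f ∈ Nat.antidiagonalTuple k n, ∏ i, raney p (r i) (f i) := by
  induction k generalizing n with
  | zero => cases n <;> simp
  | succ k ih =>
    simp only [Nat.sum_antidiagonalTuple_succ, Fin.prod_univ_succ, Fin.cons_zero, Fin.cons_succ,
      ← mul_sum, ← ih, Fin.sum_univ_succ]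
    exact raney_add p _ _ n

theorem raney_mul_eq_mul_choose (hp : 0 < p) (r n : ℕ) :
    raney p r n * (n * p + r) = r * (n * p + r).choose n := by
  induction r, n using raney.induct p with
  | case1 r => simp
  | case2 n => simp
  | case3 r n ih₁ ih₂ =>
    set N := (n + 1) * p + r with hN
    rw [show n * p + (r + p) = N by ring] at ih₂
    have h_pascal : (N + 1).choose (n + 1) = N.choose n + N.choose (n + 1) :=
      Nat.choose_succ_succ' N n
    have h_absorb := Nat.choose_succ_right_eq N n
    have h_le : n ≤ N := by nlinarith
    rw [show (n + 1) * p + (r + 1) = N + 1 by ring, raney_succ_succ, h_pascal]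
    qify [h_le] at hN ih₁ ih₂ h_absorb ⊢
    refine mul_right_cancel₀ (b := (N : ℚ)) (by positivity) ?_
    linear_combination (N + 1 : ℚ) * (ih₁ + ih₂) - p * h_absorb -
      ((N.choose n : ℚ) + N.choose (n + 1)) * hN

end Raney

theorem mCatalan_eq_raney_one {m : ℕ} (hm : 1 ≤ m) (n : ℕ) : mCatalan m n = raney m 1 n := by
  have h_raney := raney_mul_eq_mul_choose m hm 1 n
  have h_choose := Nat.choose_mul_succ_eq (n * m) n
  have h_le : n ≤ n * m + 1 := by nlinarith
  have h_m : (1 : ℚ) ≤ m := by exact_mod_cast hm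
  rw [mCatalan, div_eq_iff (by nlinarith)]
  qify [h_le] at h_raney h_choose
  refine mul_right_cancel₀ (b := (n * m + 1 : ℚ)) (by positivity) ?_
  linear_combination h_choose - (n * m + 1 - n : ℚ) * h_raney

theorem mCatalan_recursion_general (m n : ℕ) (hm : 1 ≤ m) :
    ∑ f ∈ Finset.Nat.antidiagonalTuple m (n - 1), ∏ i, mCatalan m (f i) = mCatalan m n := by
  have h_conv := raney_sum m (fun _ : Fin m => 1) (n - 1)
  simp only [sum_const, card_univ, Fintype.card_fin, smul_eq_mul, mul_one] at h_conv
  have h_shift : raney m m (n - 1) = raney m 1 n := by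
    cases n with
    | zero => simp
    | succ n => exact (raney_one_succ m n).symm
  simp only [mCatalan_eq_raney_one hm]
  exact_mod_cast h_conv.symm.trans h_shift

/-- For integers `m ≥ 1` and `n ≥ 1`,
`∑_{n₁+⋯+n_m = n−1} C^m_{n₁} ⋯ C^m_{n_m} = C^m_n`, the sum running over all `m`-tuples of
nonnegative integers summing to `n−1`. -/
theorem mCatalan_recursion (m n : ℕ) (hm : 1 ≤ m) (hn : 1 ≤ n) :
    ∑ f ∈ Finset.Nat.antidiagonalTuple m (n - 1), ∏ i, mCatalan m (f i) = mCatalan m n :=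
  mCatalan_recursion_general m n hm
end
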